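/- arXiv:2006.04526 — 2 statements merged into one kernel-verified Lean document; each statement's English description precedes it below -/
import Mathlib

section
/- On the Meson triple system T₂ (bracket μ(g_i,g_j,g_l) = δ_{li}g_j - δ_{lj}g_i), the formal map μ_t = μ + μ₂t², with μ₂(g_i,g_j,g_p) = δ_{jp}g_j - δ_{ip}g_i, is a formal deformation of order 2: the coefficients of t⁰, t¹, t², t³, t⁴ in the Lie triple system identities for μ_t all vanish. -/
/-!
In dimension two every trilinear map alternating in its first two arguments has the form
`D_L(x, y, z) = det(x, y) • L z` for a unique linear map `L`. For such brackets the cyclic identity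
is the two-dimensional identity `det(x, y) z + det(y, z) x + det(z, x) y = 0`, and the defect of the
fundamental identity of `D_L` against `D_L'` is `det(a, b) det(c, d) ([L, L'] - tr L • L') e`.
Hence `D_L` is a Lie triple system as soon as `tr L = 0`, and for traceless `L, L'` the symmetrised
defect vanishes. The Meson bracket is `D_J` for the rotation `J`, and `μ₂ = D_M` for
`M = diag(-1, 1)`; both are traceless, so `μ + t² μ₂ = D_{J + t² M}` satisfies every identity.
-/

def IsLieTripleSystem (k : Type*) {T : Type*} [Field k] [AddCommGroup T] [Module k T]
    (br : T → T → T → T) : Prop :=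
  (∀ a a' b c, br (a + a') b c = br a b c + br a' b c) ∧
  (∀ (s : k) (a b c : T), br (s • a) b c = s • br a b c) ∧
  (∀ a b b' c, br a (b + b') c = br a b c + br a b' c) ∧
  (∀ (s : k) (a b c : T), br a (s • b) c = s • br a b c) ∧
  (∀ a b c c', br a b (c + c') = br a b c + br a b c') ∧
  (∀ (s : k) (a b c : T), br a b (s • c) = s • br a b c) ∧
  (∀ a b, br a a b = 0) ∧
  (∀ a b c, br a b c + br b c a + br c a b = 0) ∧
  (∀ a b c d e, br a b (br c d e) = br (br a b c) d e + br c (br a b d) e + br c d (br a b e))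

open Matrix

section DetBracket

variable {k : Type*} [CommRing k]

def det2 (x y : Fin 2 → k) : k := x 0 * y 1 - x 1 * y 0

lemma det2_self (x : Fin 2 → k) : det2 x x = 0 := by
  unfold det2; ring

lemma det2_add_left (x x' y : Fin 2 → k) : det2 (x + x') y = det2 x y + det2 x' y := by
  simp only [det2, Pi.add_apply]; ring

lemma det2_add_right (x y y' : Fin 2 → k) : det2 x (y + y') = det2 x y + det2 x y' := by
  simp only [det2, Pi.add_apply]; ring

lemma det2_smul_left (s : k) (x y : Fin 2 → k) : det2 (s • x) y = s * det2 x y := by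
  simp only [det2, Pi.smul_apply, smul_eq_mul]; ring

lemma det2_smul_right (s : k) (x y : Fin 2 → k) : det2 x (s • y) = s * det2 x y := by
  simp only [det2, Pi.smul_apply, smul_eq_mul]; ring

lemma det2_smul_add_det2_smul_add_det2_smul (x y z : Fin 2 → k) :
    det2 x y • z + det2 y z • x + det2 z x • y = 0 := by
  ext i
  fin_cases i <;>
    simp only [det2, Pi.add_apply, Pi.smul_apply, smul_eq_mul, Pi.zero_apply, Fin.zero_eta,
      Fin.mk_one, Fin.isValue] <;> ring

lemma det2_mulVec_add_det2_mulVec (L : Matrix (Fin 2) (Fin 2) k) (x y : Fin 2 → k) :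
    det2 (L *ᵥ x) y + det2 x (L *ᵥ y) = L.trace * det2 x y := by
  simp only [det2, mulVec, dotProduct, Fin.sum_univ_two, trace_fin_two]; ring

def detBracket (L : Matrix (Fin 2) (Fin 2) k) (x y z : Fin 2 → k) : Fin 2 → k :=
  det2 x y • (L *ᵥ z)

variable (L L' : Matrix (Fin 2) (Fin 2) k)

lemma detBracket_self (a b : Fin 2 → k) : detBracket L a a b = 0 := by
  rw [detBracket, det2_self, zero_smul]

lemma detBracket_cyclic (a b c : Fin 2 → k) :
    detBracket L a b c + detBracket L b c a + detBracket L c a b = 0 := by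
  simp only [detBracket, ← mulVec_smul, ← mulVec_add, det2_smul_add_det2_smul_add_det2_smul,
    mulVec_zero]

lemma detBracket_detBracket (a b c d e : Fin 2 → k) :
    detBracket L a b (detBracket L' c d e) =
      detBracket L' (detBracket L a b c) d e + detBracket L' c (detBracket L a b d) e +
        detBracket L' c d (detBracket L a b e) +
          (det2 a b * det2 c d) • ((L * L' - L' * L - L.trace • L') *ᵥ e) := by
  simp only [detBracket, det2_smul_left, det2_smul_right, mulVec_smul, smul_smul, sub_mulVec,
    ← mulVec_mulVec, smul_mulVec]
  rw [← add_smul, ← mul_add, det2_mulVec_add_det2_mulVec]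
  module

variable {L L'}

lemma detBracket_fundamental (hL : L.trace = 0) (a b c d e : Fin 2 → k) :
    detBracket L a b (detBracket L c d e) =
      detBracket L (detBracket L a b c) d e + detBracket L c (detBracket L a b d) e +
        detBracket L c d (detBracket L a b e) := by
  rw [detBracket_detBracket L L, hL, zero_smul, sub_zero, sub_self, zero_mulVec, smul_zero,
    add_zero]

lemma detBracket_fundamental_polarized (hL : L.trace = 0) (hL' : L'.trace = 0)
    (a b c d e : Fin 2 → k) :
    detBracket L' a b (detBracket L c d e) + detBracket L a b (detBracket L' c d e) =
      detBracket L (detBracket L' a b c) d e + detBracket L' (detBracket L a b c) d e +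
        detBracket L c (detBracket L' a b d) e + detBracket L' c (detBracket L a b d) e +
          detBracket L c d (detBracket L' a b e) + detBracket L' c d (detBracket L a b e) := by
  have hdefect : (L' * L - L * L' - L'.trace • L) + (L * L' - L' * L - L.trace • L') = 0 := by
    simp only [hL, hL', zero_smul, sub_zero]
    abel
  have hcancel := congrArg (fun M => (det2 a b * det2 c d) • (M *ᵥ e)) hdefect
  simp only [add_mulVec, smul_add, zero_mulVec, smul_zero] at hcancel
  rw [detBracket_detBracket L' L a b c d e, detBracket_detBracket L L' a b c d e, ← sub_eq_zero,
    ← hcancel]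
  abel

end DetBracket

lemma isLieTripleSystem_detBracket {k : Type*} [Field k] {L : Matrix (Fin 2) (Fin 2) k}
    (hL : L.trace = 0) : IsLieTripleSystem k (detBracket L) := by
  refine ⟨?_, ?_, ?_, ?_, ?_, ?_, detBracket_self L, detBracket_cyclic L,
    detBracket_fundamental hL⟩ <;> intros <;>
    simp only [detBracket, det2_add_left, det2_add_right, det2_smul_left, det2_smul_right, add_smul,
      mulVec_add, mulVec_smul, smul_add, smul_smul, mul_comm]

lemma meson_eq_detBracket {k : Type*} [CommRing k] :
    (fun x y z : Fin 2 → k => (∑ i, x i * z i) • y - (∑ i, y i * z i) • x) =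
      detBracket !![0, -1; 1, 0] := by
  ext x y z i
  fin_cases i <;>
    simp only [detBracket, det2, dotProduct, Fin.sum_univ_two, Pi.sub_apply, Pi.smul_apply,
      smul_eq_mul, cons_mulVec, empty_mulVec, cons_val_zero, cons_val_one, cons_val_fin_one,
      Fin.isValue, Fin.zero_eta, Fin.mk_one] <;> ring

lemma mesonDeformation_eq_detBracket {k : Type*} [CommRing k] :
    (fun x y z : Fin 2 → k =>
        (∑ i, x i) • (fun p => y p * z p) - (∑ i, y i) • (fun p => x p * z p)) =
      detBracket !![-1, 0; 0, 1] := by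
  ext x y z i
  fin_cases i <;>
    simp only [detBracket, det2, dotProduct, Fin.sum_univ_two, Pi.sub_apply, Pi.smul_apply,
      smul_eq_mul, cons_mulVec, empty_mulVec, cons_val_zero, cons_val_one, cons_val_fin_one,
      Fin.isValue, Fin.zero_eta, Fin.mk_one] <;> ring

/-- On the Meson triple system T₂ (bracket μ determined by
μ(g_i,g_j,g_l) = δ_{li}g_j - δ_{lj}g_i), the formal map μ_t = μ + μ₂t², with
μ₂ determined by μ₂(g_i,g_j,g_p) = δ_{jp}g_j - δ_{ip}g_i, is a formal
deformation of order 2: the coefficients of t⁰, t¹, t², t³, t⁴ in the Lie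
triple system identities for μ_t all vanish (the t¹ and t³ coefficients are
identically zero since μ₁ = μ₃ = 0). -/
theorem meson_T2_deformation_order_two (k : Type*) [Field k] :
    let μ : (Fin 2 → k) → (Fin 2 → k) → (Fin 2 → k) → (Fin 2 → k) :=
      fun x y z => (∑ i, x i * z i) • y - (∑ i, y i * z i) • x
    let μ₂ : (Fin 2 → k) → (Fin 2 → k) → (Fin 2 → k) → (Fin 2 → k) :=
      fun x y z => (∑ i, x i) • (fun p => y p * z p) - (∑ i, y i) • (fun p => x p * z p)
    -- coefficient of t⁰: μ is a Lie triple system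
    IsLieTripleSystem k μ ∧
    -- alternating and cyclic identities for μ₂ (coefficient of t² in (1),(2))
    (∀ a b, μ₂ a a b = 0) ∧
    (∀ a b c, μ₂ a b c + μ₂ b c a + μ₂ c a b = 0) ∧
    -- coefficient of t² in the fundamental identity (mixed μ, μ₂ terms)
    (∀ a b c d e,
        μ₂ a b (μ c d e) + μ a b (μ₂ c d e) =
          μ (μ₂ a b c) d e + μ₂ (μ a b c) d e + μ c (μ₂ a b d) e +
            μ₂ c (μ a b d) e + μ c d (μ₂ a b e) + μ₂ c d (μ a b e)) ∧
    -- coefficient of t⁴ in the fundamental identity (pure μ₂ terms)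
    (∀ a b c d e,
        μ₂ a b (μ₂ c d e) =
          μ₂ (μ₂ a b c) d e + μ₂ c (μ₂ a b d) e + μ₂ c d (μ₂ a b e)) := by
  intro μ μ₂
  have hJ : trace !![(0 : k), -1; 1, 0] = 0 := by simp [trace_fin_two_of]
  have hM : trace !![(-1 : k), 0; 0, 1] = 0 := by simp [trace_fin_two_of]
  rw [show μ = _ from meson_eq_detBracket, show μ₂ = _ from mesonDeformation_eq_detBracket]
  exact ⟨isLieTripleSystem_detBracket hJ, detBracket_self _, detBracket_cyclic _,
    detBracket_fundamental_polarized hJ hM, detBracket_fundamental hM⟩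
end

section
/- If two equivariant formal deformations μ_t and μ̃_t of a G-Lie triple system T are equivalent via a formal isomorphism Ψ_t = id + Σ_{i≥1} ψ_i t^i, then their infinitesimals differ by a Yamaguti coboundary: μ₁ - μ̃₁ = δ¹ψ₁, where δ¹ψ₁(a,b,c) = [ψ₁a,b,c] + [a,ψ₁b,c] + [a,b,ψ₁c] - ψ₁[a,b,c]. Hence the cohomology class of the infinitesimal depends only on the equivalence class of the deformation. -/
/-- A trilinear (3-multilinear over k) map. -/
def IsTrilinear (k : Type*) {T : Type*} [Field k] [AddCommGroup T] [Module k T]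
    (f : T → T → T → T) : Prop :=
  (∀ a a' b c, f (a + a') b c = f a b c + f a' b c) ∧
  (∀ (s : k) (a b c : T), f (s • a) b c = s • f a b c) ∧
  (∀ a b b' c, f a (b + b') c = f a b c + f a b' c) ∧
  (∀ (s : k) (a b c : T), f a (s • b) c = s • f a b c) ∧
  (∀ a b c c', f a b (c + c') = f a b c + f a b c') ∧
  (∀ (s : k) (a b c : T), f a b (s • c) = s • f a b c)

open Finset

theorem Fintype.sum_eq_one_iff_eq_single {ι : Type*} [Fintype ι] [DecidableEq ι] (x : ι → ℕ) :
    ∑ i, x i = 1 ↔ ∃ i, x = Pi.single i 1 := by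
  have h := Finsupp.sum_eq_one_iff (Finsupp.equivFunOnFinite.symm x)
  rw [Finsupp.sum_fintype _ _ (fun _ => rfl)] at h
  simpa [Equiv.symm_apply_eq, Finsupp.single_eq_pi_single] using h

theorem Finset.Nat.sum_antidiagonalTuple_one_right {M : Type*} [AddCommMonoid M] (k : ℕ)
    (f : (Fin k → ℕ) → M) :
    ∑ q ∈ antidiagonalTuple k 1, f q = ∑ i, f (Pi.single i 1) := by
  have hinj : Function.Injective fun i : Fin k => (Pi.single i 1 : Fin k → ℕ) := fun i j h => by
    simpa [Pi.single_apply, eq_comm] using congrFun h i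
  have hset : antidiagonalTuple k 1 = univ.map ⟨_, hinj⟩ := by
    ext x
    simp [mem_antidiagonalTuple, Fintype.sum_eq_one_iff_eq_single, eq_comm]
  rw [hset, sum_map]
  rfl

theorem equivalent_deformations_infinitesimals_cohomologous_general
    {T : Type*} [AddCommGroup T]
    (br : T → T → T → T)
    (μ ν : ℕ → T → T → T → T) (hμ0 : μ 0 = br) (hν0 : ν 0 = br)
    (ψ : ℕ → T → T) (hψ0 : ∀ a, ψ 0 a = a)
    -- coefficientwise form of μ̃_t(Ψ_t a, Ψ_t b, Ψ_t c) = Ψ_t (μ_t(a,b,c))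
    (hiso : ∀ (r : ℕ) (a b c : T),
        ∑ q ∈ Finset.Nat.antidiagonalTuple 4 r,
            ν (q 0) (ψ (q 1) a) (ψ (q 2) b) (ψ (q 3) c) =
          ∑ p ∈ Finset.HasAntidiagonal.antidiagonal r, ψ p.1 (μ p.2 a b c)) :
    ∀ a b c : T,
      μ 1 a b c - ν 1 a b c =
        br (ψ 1 a) b c + br a (ψ 1 b) c + br a b (ψ 1 c) - ψ 1 (br a b c) := by
  intro a b c
  have first_order : ν 1 a b c + br (ψ 1 a) b c + br a (ψ 1 b) c + br a b (ψ 1 c) =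
      μ 1 a b c + ψ 1 (br a b c) := by
    have h := hiso 1 a b c
    rw [Nat.sum_antidiagonalTuple_one_right, Fin.sum_univ_four, Nat.sum_antidiagonal_succ] at h
    simpa [hψ0, hμ0, hν0] using h
  linear_combination (norm := abel_nf) -first_order

/-- If two equivariant formal deformations μ_t and μ̃_t (= ν)
of a G-Lie triple system T are equivalent via an equivariant formal
isomorphism Ψ_t = id + Σ_{i≥1} ψ_i tⁱ, then their infinitesimals differ by a
Yamaguti coboundary: μ₁ - μ̃₁ = δ¹ψ₁; hence the cohomology class of the
infinitesimal depends only on the equivalence class of the deformation. -/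
theorem equivalent_deformations_infinitesimals_cohomologous
    {k T G : Type*} [Field k] [AddCommGroup T] [Module k T]
    [Group G] [Finite G] [DistribMulAction G T] [SMulCommClass G k T]
    (br : T → T → T → T) (hbr : IsLieTripleSystem k br)
    (hbrG : ∀ (g : G) (a b c : T), br (g • a) (g • b) (g • c) = g • br a b c)
    (μ ν : ℕ → T → T → T → T) (hμ0 : μ 0 = br) (hν0 : ν 0 = br)
    (hμtri : ∀ i, IsTrilinear k (μ i)) (hνtri : ∀ i, IsTrilinear k (ν i))
    (hμalt : ∀ i a b, μ i a a b = 0) (hνalt : ∀ i a b, ν i a a b = 0)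
    (hμcyc : ∀ i a b c, μ i a b c + μ i b c a + μ i c a b = 0)
    (hνcyc : ∀ i a b c, ν i a b c + ν i b c a + ν i c a b = 0)
    (hμdef : ∀ (r : ℕ) (a b c d e : T),
        ∑ p ∈ Finset.HasAntidiagonal.antidiagonal r, μ p.1 a b (μ p.2 c d e) =
          ∑ p ∈ Finset.HasAntidiagonal.antidiagonal r,
            (μ p.1 (μ p.2 a b c) d e + μ p.1 c (μ p.2 a b d) e +
              μ p.1 c d (μ p.2 a b e)))
    (hνdef : ∀ (r : ℕ) (a b c d e : T),
        ∑ p ∈ Finset.HasAntidiagonal.antidiagonal r, ν p.1 a b (ν p.2 c d e) =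
          ∑ p ∈ Finset.HasAntidiagonal.antidiagonal r,
            (ν p.1 (ν p.2 a b c) d e + ν p.1 c (ν p.2 a b d) e +
              ν p.1 c d (ν p.2 a b e)))
    (hμG : ∀ i (g : G) (a b c : T), μ i (g • a) (g • b) (g • c) = g • μ i a b c)
    (hνG : ∀ i (g : G) (a b c : T), ν i (g • a) (g • b) (g • c) = g • ν i a b c)
    (ψ : ℕ → T → T) (hψ0 : ∀ a, ψ 0 a = a)
    (hψadd : ∀ i a b, ψ i (a + b) = ψ i a + ψ i b)
    (hψsmul : ∀ i (s : k) a, ψ i (s • a) = s • ψ i a)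
    (hψG : ∀ i (g : G) (a : T), ψ i (g • a) = g • ψ i a)
    -- coefficientwise form of μ̃_t(Ψ_t a, Ψ_t b, Ψ_t c) = Ψ_t (μ_t(a,b,c))
    (hiso : ∀ (r : ℕ) (a b c : T),
        ∑ q ∈ Finset.Nat.antidiagonalTuple 4 r,
            ν (q 0) (ψ (q 1) a) (ψ (q 2) b) (ψ (q 3) c) =
          ∑ p ∈ Finset.HasAntidiagonal.antidiagonal r, ψ p.1 (μ p.2 a b c)) :
    ∀ a b c : T,
      μ 1 a b c - ν 1 a b c =
        br (ψ 1 a) b c + br a (ψ 1 b) c + br a b (ψ 1 c) - ψ 1 (br a b c) :=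
  equivalent_deformations_infinitesimals_cohomologous_general br μ ν hμ0 hν0 ψ hψ0 hiso
end
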